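/- Let A₁ be the family of 2×2 matrices indexed by pairs (i,j) ∈ {0,1}² with A₁^{01} = [[1,1],[0,0]], A₁^{10} = [[0,0],[−1,1]], and A₁^{00} = A₁^{11} = 0. Then for every N divisible by 2, the operator ∑_{i,j} Tr(A₁^{i₁j₁}⋯A₁^{i_Nj_N}) |i₁…i_N⟩⟨j₁…j_N| equals U_CZY = (∏ CZ_{k,k+1})(∏ Z_k X_k) on (ℂ²)^{⊗N} with periodic boundary conditions. -/

import Mathlib

open Matrix Finset

noncomputable section

/-- Pauli X. -/
def PX : Matrix (Fin 2) (Fin 2) ℂ := !![0, 1; 1, 0]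

/-- Pauli Z. -/
def PZ : Matrix (Fin 2) (Fin 2) ℂ := !![1, 0; 0, -1]

/-- The operator on `(ℂ²)^{⊗N}` acting as `A` on site `i` and as the identity elsewhere. -/
def site (N : ℕ) (i : Fin N) (A : Matrix (Fin 2) (Fin 2) ℂ) :
    Matrix (Fin N → Fin 2) (Fin N → Fin 2) ℂ :=
  Matrix.of fun f g =>
    A (f i) (g i) * ∏ j ∈ Finset.univ.erase i, (if f j = g j then (1 : ℂ) else 0)

/-- The product `∏_{i=1}^{N} CZ_{i,i+1}` of controlled-Z gates on adjacent qubits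
(periodic boundary conditions, site indices mod `N`); all these gates are diagonal,
so the product is the diagonal operator below. -/
def CZlayer (N : ℕ) [NeZero N] : Matrix (Fin N → Fin 2) (Fin N → Fin 2) ℂ :=
  Matrix.diagonal fun f => ∏ i : Fin N, (if f i = 1 ∧ f (i + 1) = 1 then (-1 : ℂ) else 1)

/-- The product `∏_{i=1}^{N} Z_i X_i`: the tensor product of `Z·X` on every site. -/
def ZXlayer (N : ℕ) : Matrix (Fin N → Fin 2) (Fin N → Fin 2) ℂ :=
  Matrix.of fun f g => ∏ i : Fin N, (PZ * PX) (f i) (g i)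

/-- `U_CZY = (∏_i CZ_{i,i+1})·(∏_i Z_i X_i)` on `(ℂ²)^{⊗N}`, periodic boundary conditions. -/
def UCZY (N : ℕ) [NeZero N] : Matrix (Fin N → Fin 2) (Fin N → Fin 2) ℂ :=
  CZlayer N * ZXlayer N

/-- The Hamiltonian `H = ∑_i (X_i − Z_{i−1} X_i Z_{i+1})`, indices mod `N`. -/
def ham (N : ℕ) [NeZero N] : Matrix (Fin N → Fin 2) (Fin N → Fin 2) ℂ :=
  ∑ i : Fin N, (site N i PX - site N (i - 1) PZ * site N i PX * site N (i + 1) PZ)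

/-- The matrix product operator generated by a rank-4 tensor `A` (physical dimension `d`,
bond dimension `D`) with periodic boundary conditions:
`∑_{i,j} Tr(A^{i₁j₁}⋯A^{i_Nj_N}) |i₁…i_N⟩⟨j₁…j_N|`. -/
def mpo {d D : ℕ} (A : Fin d → Fin d → Matrix (Fin D) (Fin D) ℂ) (N : ℕ) :
    Matrix (Fin N → Fin d) (Fin N → Fin d) ℂ :=
  Matrix.of fun f g => Matrix.trace (((List.finRange N).map fun k => A (f k) (g k)).prod)

/-- The bond-dimension-2 MPO tensor `A₁` with `A₁^{01} = [[1,1],[0,0]]`,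
`A₁^{10} = [[0,0],[−1,1]]` and `A₁^{00} = A₁^{11} = 0`. -/
def A1 : Fin 2 → Fin 2 → Matrix (Fin 2) (Fin 2) ℂ := fun i j =>
  if i = 0 ∧ j = 1 then !![1, 1; 0, 0]
  else if i = 1 ∧ j = 0 then !![0, 0; -1, 1]
  else 0


/-!
Off the diagonal `i = j` every tensor `A₁^{ij}` is the rank-one matrix `e_i r_iᵀ` with bond
vectors `r₀ = (1, 1)` and `r₁ = (-1, 1)`, while `A₁^{ii} = 0`. A cyclic product of rank-one
matrices has trace `∏_k ⟨r_{i_k}, e_{i_{k+1}}⟩ = ∏_k r_{i_k}(i_{k+1})`. On the other side,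
`U_CZY` vanishes unless every site flips (`ZX` is off-diagonal), and then its entry is
`∏_k ±(ZX)_{i_k j_k}` with the controlled-Z sign of the bond `(k, k+1)`, which is again
`∏_k r_{i_k}(i_{k+1})`.
-/

section RankOne

variable {m R : Type*} [Fintype m] [DecidableEq m] [CommSemiring R]

theorem prod_ofFn_vecMulVec {n : ℕ} (u v : Fin (n + 1) → m → R) :
    (List.ofFn fun k => vecMulVec (u k) (v k)).prod =
      vecMulVec (u 0) ((∏ k : Fin n, v k.castSucc ⬝ᵥ u k.succ) • v (Fin.last n)) := by
  induction n with
  | zero => simp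
  | succ n ih =>
    rw [List.ofFn_succ', List.prod_concat, ih, vecMulVec_mul_vecMulVec, smul_dotProduct,
      smul_eq_mul, Fin.prod_univ_castSucc]
    rfl

theorem trace_prod_finRange_vecMulVec {N : ℕ} [NeZero N] (u v : Fin N → m → R) :
    trace ((List.finRange N).map fun k => vecMulVec (u k) (v k)).prod =
      ∏ k, v k ⬝ᵥ u (k + 1) := by
  obtain ⟨n, rfl⟩ := Nat.exists_eq_succ_of_ne_zero (NeZero.ne N)
  rw [← List.ofFn_eq_map, prod_ofFn_vecMulVec, trace_vecMulVec, dotProduct_smul,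
    Fin.prod_univ_castSucc, Fin.last_add_one, smul_eq_mul, dotProduct_comm]
  simp only [Fin.coeSucc_eq_succ]

end RankOne

def bondVec : Fin 2 → Fin 2 → ℂ := ![![1, 1], ![-1, 1]]

theorem A1_self (a : Fin 2) : A1 a a = 0 := by
  fin_cases a <;> simp [A1]

theorem A1_eq_vecMulVec {a b : Fin 2} (h : a ≠ b) :
    A1 a b = vecMulVec (Pi.single a 1) (bondVec a) := by
  fin_cases a <;> fin_cases b <;> simp_all [A1] <;>
    (ext i j; fin_cases i <;> fin_cases j <;> simp [bondVec, vecMulVec])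

theorem ZX_self (a : Fin 2) : (PZ * PX) a a = 0 := by
  fin_cases a <;> simp [PZ, PX, mul_apply]

theorem CZsign_mul_ZX {a b : Fin 2} (h : a ≠ b) (c : Fin 2) :
    (if a = 1 ∧ c = 1 then (-1 : ℂ) else 1) * (PZ * PX) a b = bondVec a c := by
  fin_cases a <;> fin_cases b <;> fin_cases c <;> simp_all [PZ, PX, bondVec, mul_apply]

variable {N : ℕ} {f g : Fin N → Fin 2}

theorem UCZY_apply [NeZero N] :
    UCZY N f g =
      ∏ k, (if f k = 1 ∧ f (k + 1) = 1 then (-1 : ℂ) else 1) * (PZ * PX) (f k) (g k) := by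
  rw [UCZY, CZlayer, ZXlayer, diagonal_mul, of_apply, prod_mul_distrib]

theorem mpo_A1_apply_of_ne [NeZero N] (h : ∀ k, f k ≠ g k) :
    mpo A1 N f g = ∏ k, bondVec (f k) (f (k + 1)) := by
  rw [mpo, of_apply, List.map_congr_left fun k _ => A1_eq_vecMulVec (h k),
    trace_prod_finRange_vecMulVec]
  simp only [dotProduct_single_one]

theorem UCZY_apply_of_ne [NeZero N] (h : ∀ k, f k ≠ g k) :
    UCZY N f g = ∏ k, bondVec (f k) (f (k + 1)) := by
  rw [UCZY_apply]
  exact prod_congr rfl fun k _ => CZsign_mul_ZX (h k) _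

theorem mpo_A1_apply_of_eq {k : Fin N} (hk : f k = g k) : mpo A1 N f g = 0 := by
  rw [mpo, of_apply, List.prod_eq_zero, trace_zero]
  exact List.mem_map.2 ⟨k, List.mem_finRange k, by rw [hk, A1_self]⟩

theorem UCZY_apply_of_eq [NeZero N] {k : Fin N} (hk : f k = g k) : UCZY N f g = 0 := by
  rw [UCZY_apply]
  exact prod_eq_zero (mem_univ k) (by rw [hk, ZX_self, mul_zero])

theorem mpo_A1_eq_UCZY_general (N : ℕ) [NeZero N] :
    mpo A1 N = UCZY N := by
  ext f g
  by_cases h : ∀ k, f k ≠ g k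
  · rw [mpo_A1_apply_of_ne h, UCZY_apply_of_ne h]
  · obtain ⟨k, hk⟩ := not_forall_not.mp h
    rw [mpo_A1_apply_of_eq hk, UCZY_apply_of_eq hk]

/-- For every `N` divisible by 2, the MPO generated by `A₁` with periodic boundary
conditions equals `U_CZY`. -/
theorem mpo_A1_eq_UCZY (N : ℕ) [NeZero N] (hN : 2 ∣ N) :
    mpo A1 N = UCZY N :=
  mpo_A1_eq_UCZY_general N
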